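/- Let t_n be the quotient of the free Lie algebra over ℝ on generators t_{ab} (indexed by unordered pairs {a,b} of distinct elements of Fin n) by the Lie ideal generated by all elements ⁅t_{ab}, t_{cd}⁆ with a, b, c, d pairwise distinct and ⁅t_{ab}, t_{ac} + t_{bc}⁆ with a, b, c pairwise distinct. Let L = FreeLieAlgebra ℝ (Fin n) and for distinct a, b let D_{ab} be the unique derivation of L with D_{ab}(x_a) = ⁅x_b, x_a⁆, D_{ab}(x_b) = ⁅x_a, x_b⁆, D_{ab}(x_c) = 0 otherwise. Then there exists a Lie algebra homomorphism φ : t_n → LieDerivation ℝ L L such that φ sends the class of the generator t_{ab} to D_{ab} for every unordered pair {a,b}. -/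

import Mathlib

/-!
The Lie algebra `t_n` is presented by generators and relations, so it suffices to check that the
derivations `D_ab` are symmetric in `a, b` and satisfy the infinitesimal braid relations. A
derivation of a free Lie algebra is determined by its values on the generators, so each relation
reduces to evaluating both sides on every generator `x_e`; the only case that is not immediate,
`e = a` in `⁅D_ab, D_ac + D_bc⁆`, is the Jacobi identity for `x_a, x_b, x_c`.
-/

open FreeLieAlgebra

/-- The index type of the generators `t_ab` of the Drinfeld–Kohno Lie algebra:
unordered pairs of distinct elements of `Fin n`. -/
def DKPairs (n : ℕ) : Type := { p : Sym2 (Fin n) // ¬ p.IsDiag }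

/-- The generator `t_ab` in the free Lie algebra, for `a ≠ b`. -/
noncomputable def dkGen {n : ℕ} (a b : Fin n) (h : a ≠ b) : FreeLieAlgebra ℝ (DKPairs n) :=
  FreeLieAlgebra.of ℝ (⟨s(a, b), by simpa using h⟩ : DKPairs n)

/-- The Lie ideal of infinitesimal braid relations. -/
noncomputable def dkIdeal (n : ℕ) : LieIdeal ℝ (FreeLieAlgebra ℝ (DKPairs n)) :=
  LieSubmodule.lieSpan ℝ (FreeLieAlgebra ℝ (DKPairs n))
    ({ x | ∃ (a b c d : Fin n) (hab : a ≠ b) (hcd : c ≠ d),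
        a ≠ c ∧ a ≠ d ∧ b ≠ c ∧ b ≠ d ∧
        x = ⁅dkGen a b hab, dkGen c d hcd⁆ } ∪
     { x | ∃ (a b c : Fin n) (hab : a ≠ b) (hac : a ≠ c) (hbc : b ≠ c),
        x = ⁅dkGen a b hab, dkGen a c hac + dkGen b c hbc⁆ })

/-- The Drinfeld–Kohno Lie algebra `t_n`. -/
def DKLie (n : ℕ) : Type := FreeLieAlgebra ℝ (DKPairs n) ⧸ dkIdeal n

noncomputable instance (n : ℕ) : LieRing (DKLie n) :=
  inferInstanceAs (LieRing (FreeLieAlgebra ℝ (DKPairs n) ⧸ dkIdeal n))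

noncomputable instance (n : ℕ) : LieAlgebra ℝ (DKLie n) :=
  inferInstanceAs (LieAlgebra ℝ (FreeLieAlgebra ℝ (DKPairs n) ⧸ dkIdeal n))

/-- The class of the generator `t_ab` in `t_n`. -/
noncomputable def dkT {n : ℕ} (a b : Fin n) (h : a ≠ b) : DKLie n :=
  LieSubmodule.Quotient.mk (N := dkIdeal n) (dkGen a b h)

namespace FreeLieAlgebra

variable (R X : Type*) [CommRing R]

theorem lieSpan_range_of :
    LieSubalgebra.lieSpan R (FreeLieAlgebra R X) (Set.range (of R)) = ⊤ := by
  set S := LieSubalgebra.lieSpan R (FreeLieAlgebra R X) (Set.range (of R))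
  let g : FreeLieAlgebra R X →ₗ⁅R⁆ S :=
    lift R fun x => ⟨of R x, LieSubalgebra.subset_lieSpan ⟨x, rfl⟩⟩
  have hg : S.incl.comp g = LieHom.id := hom_ext fun x => by simp [g]
  refine eq_top_iff.2 fun x _ => ?_
  have hx : S.incl (g x) = x := LieHom.congr_fun hg x
  exact hx ▸ (g x).2

variable {R X}

theorem lieDerivation_ext {M : Type*} [AddCommGroup M] [Module R M]
    [LieRingModule (FreeLieAlgebra R X) M] [LieModule R (FreeLieAlgebra R X) M]
    {D₁ D₂ : LieDerivation R (FreeLieAlgebra R X) M} (h : ∀ x, D₁ (of R x) = D₂ (of R x)) :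
    D₁ = D₂ :=
  LieDerivation.ext_of_lieSpan_eq_top _ (lieSpan_range_of R X) (by rintro _ ⟨x, rfl⟩; exact h x)

end FreeLieAlgebra

namespace LieIdeal

variable {R L L' : Type*} [CommRing R] [LieRing L] [LieAlgebra R L] [LieRing L'] [LieAlgebra R L']

def quotientLift (I : LieIdeal R L) (f : L →ₗ⁅R⁆ L') (h : I ≤ f.ker) : L ⧸ I →ₗ⁅R⁆ L' :=
  { I.toSubmodule.liftQ f.toLinearMap fun _ hx => LieHom.mem_ker.mp (h hx) with
    map_lie' := by rintro ⟨x⟩ ⟨y⟩; exact f.map_lie x y }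

end LieIdeal

structure IsTangentialFamily {R ι : Type*} [CommRing R]
    (D : ι → ι → LieDerivation R (FreeLieAlgebra R ι) (FreeLieAlgebra R ι)) : Prop where
  apply_of_left : ∀ a b, a ≠ b → D a b (of R a) = ⁅of R b, of R a⁆
  apply_of_right : ∀ a b, a ≠ b → D a b (of R b) = ⁅of R a, of R b⁆
  apply_of_of_ne : ∀ a b c, a ≠ b → c ≠ a → c ≠ b → D a b (of R c) = 0

namespace IsTangentialFamily

variable {R ι : Type*} [CommRing R]
  {D : ι → ι → LieDerivation R (FreeLieAlgebra R ι) (FreeLieAlgebra R ι)}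

theorem symm (hD : IsTangentialFamily D) {a b : ι} (hab : a ≠ b) : D a b = D b a := by
  refine lieDerivation_ext fun c => ?_
  by_cases hca : c = a
  · subst hca; rw [hD.apply_of_left c b hab, hD.apply_of_right b c hab.symm]
  by_cases hcb : c = b
  · subst hcb; rw [hD.apply_of_right a c hab, hD.apply_of_left c a hab.symm]
  rw [hD.apply_of_of_ne a b c hab hca hcb, hD.apply_of_of_ne b a c hab.symm hcb hca]

theorem lie_eq_zero_of_disjoint (hD : IsTangentialFamily D) {a b c d : ι} (hab : a ≠ b)
    (hcd : c ≠ d) (hac : a ≠ c) (had : a ≠ d) (hbc : b ≠ c) (hbd : b ≠ d) : ⁅D a b, D c d⁆ = 0 := by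
  have h₁ := hD.apply_of_left
  have h₂ := hD.apply_of_right
  have h₀ := hD.apply_of_of_ne
  refine lieDerivation_ext fun e => ?_
  by_cases hea : e = a
  · subst hea
    simp [h₁ e b hab, h₀ c d e hcd hac had, h₀ c d b hcd hbc hbd]
  by_cases heb : e = b
  · subst heb
    simp [h₂ a e hab, h₀ c d e hcd hbc hbd, h₀ c d a hcd hac had]
  by_cases hec : e = c
  · subst hec
    simp [h₁ e d hcd, h₀ a b e hab hac.symm hbc.symm, h₀ a b d hab had.symm hbd.symm]
  by_cases hed : e = d
  · subst hed
    simp [h₂ c e hcd, h₀ a b e hab had.symm hbd.symm, h₀ a b c hab hac.symm hbc.symm]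
  simp [h₀ a b e hab hea heb, h₀ c d e hcd hec hed]

theorem lie_add_eq_zero (hD : IsTangentialFamily D) {a b c : ι} (hab : a ≠ b) (hac : a ≠ c)
    (hbc : b ≠ c) : ⁅D a b, D a c + D b c⁆ = 0 := by
  have h₁ := hD.apply_of_left
  have h₂ := hD.apply_of_right
  have h₀ := hD.apply_of_of_ne
  refine lieDerivation_ext fun e => ?_
  by_cases hea : e = a
  · subst hea
    simp [h₁ e b hab, h₁ e c hac, h₁ b c hbc, h₀ b c e hbc hab hac, h₀ e b c hab hac.symm hbc.symm,
      h₀ e c b hac hab.symm hbc]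
  by_cases heb : e = b
  · subst heb
    simp [h₂ a e hab, h₁ e c hbc, h₁ a c hac, h₀ a c e hac hab.symm hbc,
      h₀ a e c hab hac.symm hbc.symm, h₀ e c a hbc hab hac]
  by_cases hec : e = c
  · subst hec
    simp [h₂ a e hac, h₂ b e hbc, h₁ a b hab, h₂ a b hab, h₀ a b e hab hac.symm hbc.symm]
  simp [h₀ a b e hab hea heb, h₀ a c e hac hea hec, h₀ b c e hbc heb hec]

end IsTangentialFamily

namespace DKLie

variable {n : ℕ} {L : Type*} [LieRing L] [LieAlgebra ℝ L]

theorem exists_lieHom_apply_dkT (t : Fin n → Fin n → L) (symm : ∀ a b, a ≠ b → t a b = t b a)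
    (lie_disjoint : ∀ a b c d, a ≠ b → c ≠ d → a ≠ c → a ≠ d → b ≠ c → b ≠ d → ⁅t a b, t c d⁆ = 0)
    (lie_add : ∀ a b c, a ≠ b → a ≠ c → b ≠ c → ⁅t a b, t a c + t b c⁆ = 0) :
    ∃ φ : DKLie n →ₗ⁅ℝ⁆ L, ∀ a b (hab : a ≠ b), φ (dkT a b hab) = t a b := by
  -- the value `0` on the diagonal is never used; it only makes the function symmetric
  let t' : Sym2 (Fin n) → L := Sym2.lift ⟨fun a b => if a = b then 0 else t a b, fun a b => by
    by_cases hab : a = b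
    · simp [hab]
    · simp [hab, Ne.symm hab, symm a b hab]⟩
  let ψ : FreeLieAlgebra ℝ (DKPairs n) →ₗ⁅ℝ⁆ L := FreeLieAlgebra.lift ℝ fun p => t' p.1
  have hψ : ∀ a b (hab : a ≠ b), ψ (dkGen a b hab) = t a b := by
    intro a b hab
    refine (FreeLieAlgebra.lift_of_apply (R := ℝ) _ _).trans ?_
    simp [t', hab]
  have hker : dkIdeal n ≤ ψ.ker := by
    rw [dkIdeal, LieSubmodule.lieSpan_le]
    rintro x (⟨a, b, c, d, hab, hcd, hac, had, hbc, hbd, rfl⟩ | ⟨a, b, c, hab, hac, hbc, rfl⟩)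
    · rw [SetLike.mem_coe, LieHom.mem_ker, LieHom.map_lie, hψ, hψ]
      exact lie_disjoint a b c d hab hcd hac had hbc hbd
    · rw [SetLike.mem_coe, LieHom.mem_ker, LieHom.map_lie, map_add, hψ, hψ, hψ]
      exact lie_add a b c hab hac hbc
  exact ⟨(dkIdeal n).quotientLift ψ hker, hψ⟩

end DKLie

/-- There is a Lie algebra homomorphism `φ : t_n → Der(L)` sending each generator
`t_ab` to the tangential derivation `D_ab` of the free Lie algebra
`L = FreeLieAlgebra ℝ (Fin n)`. -/
theorem stmt_5 (n : ℕ)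
    (D : Fin n → Fin n → LieDerivation ℝ (FreeLieAlgebra ℝ (Fin n)) (FreeLieAlgebra ℝ (Fin n)))
    (hDa : ∀ a b : Fin n, a ≠ b →
      D a b (FreeLieAlgebra.of ℝ a) = ⁅FreeLieAlgebra.of ℝ b, FreeLieAlgebra.of ℝ a⁆)
    (hDb : ∀ a b : Fin n, a ≠ b →
      D a b (FreeLieAlgebra.of ℝ b) = ⁅FreeLieAlgebra.of ℝ a, FreeLieAlgebra.of ℝ b⁆)
    (hDc : ∀ a b c : Fin n, a ≠ b → c ≠ a → c ≠ b → D a b (FreeLieAlgebra.of ℝ c) = 0) :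
    ∃ φ : DKLie n →ₗ⁅ℝ⁆
        LieDerivation ℝ (FreeLieAlgebra ℝ (Fin n)) (FreeLieAlgebra ℝ (Fin n)),
      ∀ (a b : Fin n) (hab : a ≠ b), φ (dkT a b hab) = D a b := by
  have hD : IsTangentialFamily D := ⟨hDa, hDb, hDc⟩
  exact DKLie.exists_lieHom_apply_dkT D (fun _ _ => hD.symm)
    (fun _ _ _ _ => hD.lie_eq_zero_of_disjoint) (fun _ _ _ => hD.lie_add_eq_zero)
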